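/- arXiv:2107.01299 — 6 statements merged into one kernel-verified Lean document; each statement's English description precedes it below -/
import Mathlib

section
/- Let 𝒜_s ⊆ 𝒜_{s'} be two sets of n-REA axioms (relative to a fixed background set X), and let χ be 𝒜_s-supported and χ' be 𝒜_{s'}-supported with dom χ' ⊇ dom χ. If there is a point ⟨m,x⟩ with χ(⟨m,x⟩) = 1 and χ'(⟨m,x⟩) = 0, then χ and χ' are incompatible on the columns with index less than m; that is, there exists ⟨m',y⟩ with m' < m such that χ(⟨m',y⟩) and χ'(⟨m',y⟩) are both defined and unequal. -/
/-- Finite (or arbitrary) partial `{0,1}`-valued functions on points `⟨m,x⟩`,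
where the first coordinate is the column index. -/
abbrev PartFn := ℕ × ℕ → Option Bool

/-- An axiom is a pair `⟨σ, y⟩` of a partial function `σ` (the hypothesis)
and an output point `y = ⟨m,z⟩`. -/
structure REAAxiom where
  hyp : PartFn
  out : ℕ × ℕ

/-- `⟨σ, ⟨m,z⟩⟩` is an `n`-REA axiom if `0 < m ≤ n` and `dom σ` only
mentions points in columns `< m`. -/
def IsNREAAxiom (n : ℕ) (a : REAAxiom) : Prop :=
  0 < a.out.1 ∧ a.out.1 ≤ n ∧ ∀ p : ℕ × ℕ, (a.hyp p).isSome → p.1 < a.out.1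

/-- `σ` is a restriction of `χ` (equivalently, `χ` extends `σ`). -/
def Restricts (σ χ : PartFn) : Prop := ∀ p b, σ p = some b → χ p = some b

/-- `χ` is `𝒜`-supported (relative to the background set `X`): it agrees with `X`
on column `0`, is `0` on columns `> n`, and on columns `1,…,n` its value is `1`
exactly when some axiom in `𝒜` for that point has its hypothesis extended by `χ`. -/
def Supported (n : ℕ) (X : Set ℕ) (𝒜 : Set REAAxiom) (χ : PartFn) : Prop :=
  (∀ x b, χ (0, x) = some b → (b = true ↔ x ∈ X)) ∧
  (∀ m x b, n < m → χ (m, x) = some b → b = false) ∧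
  (∀ m x b, 0 < m → m ≤ n → χ (m, x) = some b →
    (b = true ↔ ∃ a ∈ 𝒜, a.out = (m, x) ∧ Restricts a.hyp χ))

/-- If `𝒜_s ⊆ 𝒜_{s'}` are sets of `n`-REA axioms, `χ` is `𝒜_s`-supported, `χ'` is
`𝒜_{s'}`-supported with `dom χ' ⊇ dom χ`, and `χ(⟨m,x⟩) = 1` while `χ'(⟨m,x⟩) = 0`,
then `χ` and `χ'` disagree at some common point in a column of index `< m`. -/
theorem supported_change_incompatible_below (n : ℕ) (X : Set ℕ)
    (𝒜s 𝒜s' : Set REAAxiom)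
    (h𝒜s : ∀ a ∈ 𝒜s, IsNREAAxiom n a) (h𝒜s' : ∀ a ∈ 𝒜s', IsNREAAxiom n a)
    (hsub : 𝒜s ⊆ 𝒜s') (χ χ' : PartFn)
    (hχ : Supported n X 𝒜s χ) (hχ' : Supported n X 𝒜s' χ')
    (hdom : ∀ p, (χ p).isSome → (χ' p).isSome)
    (m x : ℕ) (hone : χ (m, x) = some true) (hzero : χ' (m, x) = some false) :
    ∃ m' y b b', m' < m ∧ χ (m', y) = some b ∧ χ' (m', y) = some b' ∧ b ≠ b' := by
  obtain ⟨h0, hhigh, hsup⟩ := hχ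
  obtain ⟨h0', hhigh', hsup'⟩ := hχ'
  -- m ≠ 0
  rcases Nat.eq_zero_or_pos m with hm0 | hmpos
  · subst hm0
    exact absurd ((h0' x false hzero).not.mp (by simp)) (fun h => h ((h0 x true hone).mp rfl))
  -- m ≤ n
  by_cases hmn : m ≤ n
  · obtain ⟨a, ha, haout, hrest⟩ := (hsup m x true hmpos hmn hone).mp rfl
    have hnot : ¬ Restricts a.hyp χ' := by
      intro hr
      have := (hsup' m x false hmpos hmn hzero).mpr ⟨a, hsub ha, haout, hr⟩
      simp at this
    simp only [Restricts, not_forall] at hnot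
    obtain ⟨p, b, hpb, hne⟩ := hnot
    have hχp : χ p = some b := hrest p b hpb
    have hs : (χ' p).isSome := hdom p (by simp [hχp])
    obtain ⟨b', hb'⟩ := Option.isSome_iff_exists.mp hs
    have hlt : p.1 < m := by
      have := (h𝒜s a ha).2.2 p (by simp [hpb])
      rwa [haout] at this
    exact ⟨p.1, p.2, b, b', hlt, by rwa [Prod.mk.eta], by rwa [Prod.mk.eta], fun h => hne (h ▸ hb')⟩
  · have := hhigh m x true (lt_of_not_ge hmn) hone
    simp at this
end

section
/- Positive change property: Let 𝒜_s ⊆ 𝒜_{s'} be sets of n-REA axioms and let χ be 𝒜_s-supported and χ' be 𝒜_{s'}-supported with dom χ' ⊇ dom χ. If χ(⟨m,x⟩) = 1 and χ'(⟨m,x⟩) = 0 for some 2 ≤ m ≤ n, then there exist m' < m and y with χ(⟨m',y⟩) = 0 and χ'(⟨m',y⟩) = 1. In other words, an element can only leave the approximation of column m if some new element enters a strictly earlier column. -/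
lemma one_to_zero_aux (n : ℕ) (X : Set ℕ)
    (𝒜s 𝒜s' : Set REAAxiom)
    (h𝒜s : ∀ a ∈ 𝒜s, IsNREAAxiom n a)
    (hsub : 𝒜s ⊆ 𝒜s') (χ χ' : PartFn)
    (hχ : Supported n X 𝒜s χ) (hχ' : Supported n X 𝒜s' χ')
    (hdom : ∀ p, (χ p).isSome → (χ' p).isSome) :
    ∀ m, 0 < m → m ≤ n → ∀ x, χ (m, x) = some true → χ' (m, x) = some false →
    ∃ m' y, m' < m ∧ χ (m', y) = some false ∧ χ' (m', y) = some true := by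
  intro m
  induction m using Nat.strong_induction_on with
  | _ m ih =>
    intro hm0 hmn x hone hzero
    -- from χ(m,x)=1, get an axiom a ∈ 𝒜s supported by χ
    obtain ⟨a, ha, haout, hres⟩ :=
      (hχ.2.2 m x true hm0 hmn hone).mp rfl
    -- χ'(m,x)=0 means no axiom in 𝒜s' works, in particular a fails
    have hnot : ¬ ∃ a ∈ 𝒜s', a.out = (m, x) ∧ Restricts a.hyp χ' := by
      intro h
      have := (hχ'.2.2 m x false hm0 hmn hzero).mpr h
      simp at this
    have hnres : ¬ Restricts a.hyp χ' := fun h => hnot ⟨a, hsub ha, haout, h⟩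
    -- find a disagreement point
    simp only [Restricts, not_forall] at hnres
    obtain ⟨p, b, hpb, hp'⟩ := hnres
    have hχp : χ p = some b := hres p b hpb
    have hcol : p.1 < m := by
      have := (h𝒜s a ha).2.2 p (by rw [hpb]; rfl)
      rwa [haout] at this
    obtain ⟨b', hb'⟩ := Option.isSome_iff_exists.mp (hdom p (by rw [hχp]; rfl))
    have hbb' : b' ≠ b := fun h => hp' (h ▸ hb')
    cases b with
    | false =>
      have : b' = true := by cases b' <;> simp_all
      exact ⟨p.1, p.2, hcol, by rwa [Prod.mk.eta], by rw [Prod.mk.eta, hb', this]⟩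
    | true =>
      have hb'f : b' = false := by
        cases b'
        · rfl
        · exact absurd rfl hbb'
      rcases Nat.eq_zero_or_pos p.1 with h0 | hpos
      · -- column 0: contradiction with agreement with X
        have h1 : p.2 ∈ X := by
          have := hχ.1 p.2 true (by rw [← h0, Prod.mk.eta]; exact hχp)
          exact this.mp rfl
        have h2 : p.2 ∉ X := by
          have := hχ'.1 p.2 false (by rw [← h0, Prod.mk.eta, hb', hb'f])
          intro hx
          exact absurd (this.mpr hx) (by simp)
        exact absurd h1 h2
      · obtain ⟨m', y, hlt, h1, h2⟩ :=
          ih p.1 hcol hpos (le_trans (le_of_lt hcol) hmn) p.2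
            (by rw [Prod.mk.eta]; exact hχp)
            (by rw [Prod.mk.eta, hb', hb'f])
        exact ⟨m', y, lt_trans hlt hcol, h1, h2⟩

/-- Positive change property: if `𝒜_s ⊆ 𝒜_{s'}` are sets of `n`-REA axioms, `χ` is
`𝒜_s`-supported, `χ'` is `𝒜_{s'}`-supported with `dom χ' ⊇ dom χ`, and
`χ(⟨m,x⟩) = 1` while `χ'(⟨m,x⟩) = 0` for some `2 ≤ m ≤ n`, then some element
enters a strictly earlier column: there are `m' < m` and `y` with
`χ(⟨m',y⟩) = 0` and `χ'(⟨m',y⟩) = 1`. -/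
theorem positive_change_property (n : ℕ) (X : Set ℕ)
    (𝒜s 𝒜s' : Set REAAxiom)
    (h𝒜s : ∀ a ∈ 𝒜s, IsNREAAxiom n a) (h𝒜s' : ∀ a ∈ 𝒜s', IsNREAAxiom n a)
    (hsub : 𝒜s ⊆ 𝒜s') (χ χ' : PartFn)
    (hχ : Supported n X 𝒜s χ) (hχ' : Supported n X 𝒜s' χ')
    (hdom : ∀ p, (χ p).isSome → (χ' p).isSome)
    (m x : ℕ) (hm2 : 2 ≤ m) (hmn : m ≤ n)
    (hone : χ (m, x) = some true) (hzero : χ' (m, x) = some false) :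
    ∃ m' y, m' < m ∧ χ (m', y) = some false ∧ χ' (m', y) = some true := by
  exact one_to_zero_aux n X 𝒜s 𝒜s' h𝒜s hsub χ χ' hχ hχ' hdom m
    (lt_of_lt_of_le (by norm_num) hm2) hmn x hone hzero
end

section
/- Return-forces-change lemma: Let 𝒜_s ⊆ 𝒜_{s'} ⊆ 𝒜_{s''} be sets of n-REA axioms, and let χ, χ', χ'' be respectively 𝒜_s-, 𝒜_{s'}-, and 𝒜_{s''}-supported finite partial functions, with χ'' extending χ. If χ' is incompatible with χ at some point of column at most m (i.e., they disagree at some defined point ⟨k,y⟩ with k ≤ m), then χ'' is incompatible with χ' at some point of column at most m−1. -/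
/-- `χ` and `χ'` are incompatible at a column of index `≤ m`: they disagree at
some common point `⟨k,y⟩` with `k ≤ m`. -/
def IncompatBelow (m : ℕ) (χ χ' : PartFn) : Prop :=
  ∃ k y b b', k ≤ m ∧ χ (k, y) = some b ∧ χ' (k, y) = some b' ∧ b ≠ b'

/-- Return-forces-change: let `𝒜_s ⊆ 𝒜_{s'} ⊆ 𝒜_{s''}` be sets of `n`-REA axioms
and `χ, χ', χ''` respectively supported by them (with growing domains), with
`χ''` extending `χ`.  If `χ'` is incompatible with `χ` at a column `≤ m`, then
`χ''` is incompatible with `χ'` at a column `≤ m - 1`. -/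
theorem return_forces_change (n : ℕ) (X : Set ℕ)
    (𝒜s 𝒜s' 𝒜s'' : Set REAAxiom)
    (h𝒜s : ∀ a ∈ 𝒜s, IsNREAAxiom n a) (h𝒜s' : ∀ a ∈ 𝒜s', IsNREAAxiom n a)
    (h𝒜s'' : ∀ a ∈ 𝒜s'', IsNREAAxiom n a)
    (hsub : 𝒜s ⊆ 𝒜s') (hsub' : 𝒜s' ⊆ 𝒜s'')
    (χ χ' χ'' : PartFn)
    (hχ : Supported n X 𝒜s χ) (hχ' : Supported n X 𝒜s' χ')
    (hχ'' : Supported n X 𝒜s'' χ'')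
    (hdom : ∀ p, (χ p).isSome → (χ' p).isSome)
    (hdom' : ∀ p, (χ' p).isSome → (χ'' p).isSome)
    (hext : Restricts χ χ'')
    (m : ℕ) (hinc : IncompatBelow m χ χ') :
    IncompatBelow (m - 1) χ'' χ' := by
  classical
  obtain ⟨k0, y0, b0, b0', hk0m, hc0, hc0', hne0⟩ := hinc
  have hP : ∃ k, ∃ y b b', χ (k, y) = some b ∧ χ' (k, y) = some b' ∧ b ≠ b' :=
    ⟨k0, y0, b0, b0', hc0, hc0', hne0⟩
  obtain ⟨y, b, b', hc, hc', hne⟩ := Nat.find_spec hP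
  set k := Nat.find hP with hkdef
  have hkm : k ≤ m :=
    le_trans (Nat.find_le ⟨y0, b0, b0', hc0, hc0', hne0⟩) hk0m
  have hk1 : 0 < k := by
    rcases Nat.eq_zero_or_pos k with h0 | h
    · exfalso
      rw [h0] at hc hc'
      have h1 := hχ.1 y b hc
      have h2 := hχ'.1 y b' hc'
      have h3 : (b = true) ↔ (b' = true) := h1.trans h2.symm
      cases b <;> cases b' <;> simp only [iff_true, true_iff, false_iff] at h3 <;>
        first | exact hne rfl | exact h3 | exact hne (h3 ▸ rfl)
    · exact h
  have hkn : k ≤ n := by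
    by_contra h
    push_neg at h
    have h1 := hχ.2.1 k y b h hc
    have h2 := hχ'.2.1 k y b' h hc'
    subst h1 h2; exact hne rfl
  cases b with
  | true =>
    -- positive in χ, so there is an axiom in 𝒜s; its hypothesis fails in χ',
    -- giving a disagreement between χ and χ' at a smaller column: contradiction.
    exfalso
    obtain ⟨a, ha, haout, hrest⟩ := (hχ.2.2 k y true hk1 hkn hc).mp rfl
    have hb' : b' = false := by
      cases b' with
      | false => rfl
      | true => exact absurd rfl hne
    have hnr : ¬ Restricts a.hyp χ' := by
      intro hr
      have := (hχ'.2.2 k y b' hk1 hkn hc').mpr ⟨a, hsub ha, haout, hr⟩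
      rw [hb'] at this; exact Bool.false_ne_true this
    rw [Restricts] at hnr
    push_neg at hnr
    obtain ⟨p, c, hpc, hpc'⟩ := hnr
    have hχp : χ p = some c := hrest p c hpc
    have hχ'p : (χ' p).isSome := hdom p (by rw [hχp]; rfl)
    obtain ⟨c', hc'p⟩ := Option.isSome_iff_exists.mp hχ'p
    have hcc : c ≠ c' := fun h => hpc' (h ▸ hc'p)
    have hplt : p.1 < k := by
      have := (h𝒜s a ha).2.2 p (by rw [hpc]; rfl)
      rwa [haout] at this
    exact Nat.find_min hP hplt
      ⟨p.2, c, c', by rwa [Prod.mk.eta], by rwa [Prod.mk.eta], hcc⟩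
  | false =>
    -- χ'(k,y) = true: an axiom in 𝒜s' applies to χ'; since χ''(k,y) = false,
    -- its hypothesis fails in χ'', giving a disagreement at a smaller column.
    have hb' : b' = true := by
      cases b' with
      | true => rfl
      | false => exact absurd rfl hne
    rw [hb'] at hc'
    obtain ⟨a, ha, haout, hrest⟩ := (hχ'.2.2 k y true hk1 hkn hc').mp rfl
    have hχ''ky : χ'' (k, y) = some false := hext _ _ hc
    have hnr : ¬ Restricts a.hyp χ'' := by
      intro hr
      have := (hχ''.2.2 k y false hk1 hkn hχ''ky).mpr ⟨a, hsub' ha, haout, hr⟩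
      exact Bool.false_ne_true this
    rw [Restricts] at hnr
    push_neg at hnr
    obtain ⟨p, c, hpc, hpc''⟩ := hnr
    have hχ'p : χ' p = some c := hrest p c hpc
    have hχ''p : (χ'' p).isSome := hdom' p (by rw [hχ'p]; rfl)
    obtain ⟨c', hc''p⟩ := Option.isSome_iff_exists.mp hχ''p
    have hcc : c' ≠ c := fun h => hpc'' (h ▸ hc''p)
    have hplt : p.1 < k := by
      have := (h𝒜s' a ha).2.2 p (by rw [hpc]; rfl)
      rwa [haout] at this
    exact ⟨p.1, p.2, c', c, Nat.le_sub_one_of_lt (lt_of_lt_of_le hplt hkm),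
      by rwa [Prod.mk.eta], by rwa [Prod.mk.eta], hcc⟩
end

section
/- Conversely, every n-REA operator arises from an r.e. set of axioms: given a computable function f defining the n-REA operator J_f by the recursion J⁰(X) = X, J^{m+1}(X) = W_{f(m)}^{J⁰(X)⊕⋯ (join of previous levels)}, and J_f(X) = ⊕_{m<n+1} J^m(X), there is a computably enumerable set 𝒜_f of n-REA axioms such that the operator induced by 𝒜_f equals J_f, and an r.e. index for 𝒜_f can be computed uniformly from an index for f. -/
/-- The Cantor pairing function. -/
def pairN (x y : ℕ) : ℕ := (x + y) * (x + y + 1) / 2 + y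

/-- Finite oracle conditions. -/
abbrev Cond (γ : Type) := List (γ × Bool)

/-- `σ` is accurate for the set `C`. -/
def Accurate {γ : Type} (C : Set γ) (σ : Cond γ) : Prop :=
  ∀ q ∈ σ, (q.2 = true ↔ q.1 ∈ C)

/-- An axiom over points of `ℕ × ℕ`. -/
abbrev REAAx := Cond (ℕ × ℕ) × (ℕ × ℕ)

/-- `n`-REA axioms. -/
def IsNREAAx (n : ℕ) (a : REAAx) : Prop :=
  0 < a.2.1 ∧ a.2.1 ≤ n ∧ ∀ q ∈ a.1, q.1.1 < a.2.1

/-- `W_{f(m)}^Z`, interpreted as `∅` when `f(m)` is undefined. -/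
def WAt (W : ℕ → Set ℕ → Set ℕ) (f : ℕ →. ℕ) (m : ℕ) (Z : Set ℕ) : Set ℕ :=
  {y | ∃ e ∈ f m, y ∈ W e Z}

/-- The levels of the `n`-REA operator `J_f` together with the running join:
`levels m = (J^m(X), ⊕_{i ≤ m} J^i(X))`, where `J⁰(X) = X` and
`J^{m+1}(X) = W_{f(m)}` applied to the join of the previous levels. -/
def levels (W : ℕ → Set ℕ → Set ℕ) (f : ℕ →. ℕ) (X : Set ℕ) : ℕ → Set ℕ × Set ℕ
  | 0 => (X, {q | ∃ x ∈ X, q = pairN 0 x})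
  | m + 1 =>
      let prev := levels W f X m
      let L := WAt W f m prev.2
      (L, prev.2 ∪ {q | ∃ x ∈ L, q = pairN (m + 1) x})

/-- The `n`-REA operator `J_f(X) = ⊕_{m < n+1} J^m(X)`. -/
def Jf (W : ℕ → Set ℕ → Set ℕ) (f : ℕ →. ℕ) (n : ℕ) (X : Set ℕ) : Set ℕ :=
  (levels W f X n).2

/-- Accuracy of an axiom hypothesis for a pairing-coded set. -/
def AccurateN (S : Set ℕ) (σ : Cond (ℕ × ℕ)) : Prop :=
  ∀ q ∈ σ, (q.2 = true ↔ pairN q.1.1 q.1.2 ∈ S)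

/-! ### Arithmetic facts about the Cantor pairing function -/

lemma tri_two (s : ℕ) : 2 * (s * (s + 1) / 2) = s * (s + 1) :=
  Nat.mul_div_cancel' (Nat.even_mul_succ_self s).two_dvd

lemma pairN_inj {a b c d : ℕ} (h : pairN a b = pairN c d) : a = c ∧ b = d := by
  have key : ∀ s t b d : ℕ, b ≤ s → d ≤ t → s*(s+1) + 2*b = t*(t+1) + 2*d → s = t := by
    intro s t b d hb hd h
    rcases lt_trichotomy s t with hlt | he | hlt
    · have h1 : (s+1)*(s+2) ≤ t*(t+1) := Nat.mul_le_mul hlt (by omega)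
      have e1 : (s+1)*(s+2) = s*(s+1) + 2*(s+1) := by ring
      omega
    · exact he
    · have h1 : (t+1)*(t+2) ≤ s*(s+1) := Nat.mul_le_mul hlt (by omega)
      have e1 : (t+1)*(t+2) = t*(t+1) + 2*(t+1) := by ring
      omega
  have h2 : (a+b)*((a+b)+1) + 2*b = (c+d)*((c+d)+1) + 2*d := by
    unfold pairN at h
    have t1 := tri_two (a+b); have t2 := tri_two (c+d)
    omega
  have hs := key (a+b) (c+d) b d (by omega) (by omega) h2
  rw [hs] at h2
  constructor <;> omega

lemma pairN_zero (y : ℕ) : pairN 0 y + 1 = pairN (y+1) 0 := by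
  have t1 := tri_two y; have t2 := tri_two (y+1)
  have e : (y+1)*(y+1+1) = y*(y+1) + 2*(y+1) := by ring
  simp only [pairN, Nat.zero_add, Nat.add_zero]
  omega

lemma pairN_step (x y : ℕ) : pairN (x+1) y + 1 = pairN x (y+1) := by
  simp only [pairN, show x+1+y = x+y+1 from by omega, show x+(y+1) = x+y+1 from by omega]
  omega

lemma pairN_surj (z : ℕ) : ∃ x y, pairN x y = z := by
  induction z with
  | zero => exact ⟨0, 0, rfl⟩
  | succ z ih =>
    obtain ⟨x, y, h⟩ := ih
    cases x with
    | zero => exact ⟨y+1, 0, by rw [← pairN_zero, h]⟩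
    | succ x => exact ⟨x, y+1, by rw [← pairN_step, h]⟩

/-- A (noncomputable) inverse of the pairing function. -/
noncomputable def unpairN (z : ℕ) : ℕ × ℕ :=
  ((pairN_surj z).choose, (pairN_surj z).choose_spec.choose)

lemma pairN_unpairN (z : ℕ) : pairN (unpairN z).1 (unpairN z).2 = z :=
  (pairN_surj z).choose_spec.choose_spec

/-! ### Structure of the join -/

lemma mem_levels_snd {W : ℕ → Set ℕ → Set ℕ} {f : ℕ →. ℕ} {X : Set ℕ} :
    ∀ (m z : ℕ), z ∈ (levels W f X m).2 ↔
      ∃ i x, i ≤ m ∧ x ∈ (levels W f X i).1 ∧ z = pairN i x := by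
  intro m
  induction m with
  | zero =>
    intro z
    simp only [levels, Set.mem_setOf_eq, Nat.le_zero]
    constructor
    · rintro ⟨x, hx, rfl⟩; exact ⟨0, x, rfl, hx, rfl⟩
    · rintro ⟨i, x, rfl, hx, rfl⟩; exact ⟨x, hx, rfl⟩
  | succ m ih =>
    intro z
    simp only [levels, Set.mem_union, Set.mem_setOf_eq, ih]
    constructor
    · rintro (⟨i, x, him, hx, rfl⟩ | ⟨x, hx, rfl⟩)
      · exact ⟨i, x, by omega, hx, rfl⟩
      · exact ⟨m+1, x, le_rfl, by simpa [levels] using hx, rfl⟩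
    · rintro ⟨i, x, him, hx, rfl⟩
      rcases Nat.lt_or_ge i (m+1) with h | h
      · exact Or.inl ⟨i, x, by omega, hx, rfl⟩
      · have : i = m + 1 := by omega
        subst this
        exact Or.inr ⟨x, by simpa [levels] using hx, rfl⟩

lemma pairN_mem_levels {W : ℕ → Set ℕ → Set ℕ} {f : ℕ →. ℕ} {X : Set ℕ} {m l y : ℕ} :
    pairN l y ∈ (levels W f X m).2 ↔ l ≤ m ∧ y ∈ (levels W f X l).1 := by
  rw [mem_levels_snd]
  constructor
  · rintro ⟨i, x, him, hx, he⟩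
    obtain ⟨rfl, rfl⟩ := pairN_inj he
    exact ⟨him, hx⟩
  · rintro ⟨hlm, hy⟩; exact ⟨l, y, hlm, hy, rfl⟩

lemma levels_fst_succ {W : ℕ → Set ℕ → Set ℕ} {f : ℕ →. ℕ} {X : Set ℕ} {m : ℕ} :
    (levels W f X (m+1)).1 = WAt W f m (levels W f X m).2 := rfl

/-! ### The computable verifier for the axiom set -/

open Encodable

/-- Translate a condition entry over `ℕ × ℕ` to one over `ℕ` via the pairing. -/
def trEnt (q : (ℕ × ℕ) × Bool) : ℕ × Bool := (pairN q.1.1 q.1.2, q.2)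

/-- Keep only entries whose column is `< l`. -/
def keepO (l : ℕ) (q : (ℕ × ℕ) × Bool) : Option ((ℕ × ℕ) × Bool) :=
  if q.1.1 < l then some q else none

/-- Detect entries violating the `n`-REA restriction. -/
def badO (l : ℕ) (q : (ℕ × ℕ) × Bool) : Option ((ℕ × ℕ) × Bool) :=
  if q.2 = true ∧ l ≤ q.1.1 then some q else none

/-- The decidable part of the axiom check. -/
def CProp (n : ℕ) (p : REAAx × (ℕ × Cond ℕ × Cond (ℕ × ℕ))) : Prop :=
  0 < p.1.2.1 ∧ p.1.2.1 ≤ n ∧ p.2.2.1 = p.2.2.2.map trEnt ∧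
    p.2.2.2.filterMap (badO p.1.2.1) = [] ∧ p.1.1 = p.2.2.2.filterMap (keepO p.1.2.1)

instance (n p) : Decidable (CProp n p) := by unfold CProp; infer_instance

/-- The total part of the verifier. -/
def OFun (n : ℕ) (pv : (REAAx × ℕ) × ℕ) : Option (ℕ × Cond ℕ × ℕ) :=
  (decode (α := ℕ × Cond ℕ × Cond (ℕ × ℕ)) pv.1.2).bind fun t =>
    if CProp n (pv.1.1, t) ∧ pv.2 = t.1 then some (t.1, t.2.1, pv.1.1.2.2) else none

/-- The verifier for membership in the axiom set. -/
def GFun (n : ℕ) (f : ℕ →. ℕ) (U : Set (ℕ × Cond ℕ × ℕ)) (p : REAAx × ℕ) : Part Unit :=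
  (f (Nat.pred p.1.2.1)).bind fun v =>
    (Part.ofOption (OFun n (p, v))).bind fun x =>
      Part.assert (x ∈ U) fun _ => Part.some ()

lemma primrec_pairN : Primrec₂ pairN := by
  have hAdd : Primrec fun q : ℕ × ℕ => q.1 + q.2 := Primrec.nat_add.comp Primrec.fst Primrec.snd
  have h1 : Primrec fun q : ℕ × ℕ => (q.1 + q.2) * (q.1 + q.2 + 1) :=
    Primrec.nat_mul.comp hAdd (Primrec.succ.comp hAdd)
  exact (Primrec.nat_add.comp (Primrec.nat_div.comp h1 (Primrec.const 2)) Primrec.snd).to₂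

lemma primrec_trEnt : Primrec trEnt :=
  (primrec_pairN.comp (Primrec.fst.comp Primrec.fst) (Primrec.snd.comp Primrec.fst)).pair
    Primrec.snd

lemma primrec_CProp (n : ℕ) : PrimrecPred (CProp n) := by
  have pl : Primrec fun p : REAAx × (ℕ × Cond ℕ × Cond (ℕ × ℕ)) => p.1.2.1 :=
    Primrec.fst.comp (Primrec.snd.comp Primrec.fst)
  have pτ : Primrec fun p : REAAx × (ℕ × Cond ℕ × Cond (ℕ × ℕ)) => p.2.2.2 :=
    Primrec.snd.comp (Primrec.snd.comp Primrec.snd)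
  have pσ : Primrec fun p : REAAx × (ℕ × Cond ℕ × Cond (ℕ × ℕ)) => p.2.2.1 :=
    Primrec.fst.comp (Primrec.snd.comp Primrec.snd)
  have pax : Primrec fun p : REAAx × (ℕ × Cond ℕ × Cond (ℕ × ℕ)) => p.1.1 :=
    Primrec.fst.comp Primrec.fst
  have h1 : PrimrecPred fun p : REAAx × (ℕ × Cond ℕ × Cond (ℕ × ℕ)) => 0 < p.1.2.1 :=
    Primrec.nat_lt.comp (Primrec.const 0) pl
  have h2 : PrimrecPred fun p : REAAx × (ℕ × Cond ℕ × Cond (ℕ × ℕ)) => p.1.2.1 ≤ n :=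
    Primrec.nat_le.comp pl (Primrec.const n)
  have hmap : Primrec fun p : REAAx × (ℕ × Cond ℕ × Cond (ℕ × ℕ)) => p.2.2.2.map trEnt :=
    Primrec.list_map pτ (primrec_trEnt.comp Primrec.snd).to₂
  have h3 : PrimrecPred fun p : REAAx × (ℕ × Cond ℕ × Cond (ℕ × ℕ)) =>
      p.2.2.1 = p.2.2.2.map trEnt := Primrec.eq.comp pσ hmap
  have hbad : Primrec fun p : REAAx × (ℕ × Cond ℕ × Cond (ℕ × ℕ)) =>
      p.2.2.2.filterMap (badO p.1.2.1) := by
    apply Primrec.listFilterMap pτ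
    apply Primrec.ite
    · exact (PrimrecPred.and (Primrec.eq.comp (Primrec.snd.comp Primrec.snd)
        (Primrec.const true))
        (Primrec.nat_le.comp (pl.comp Primrec.fst)
          (Primrec.fst.comp (Primrec.fst.comp Primrec.snd))))
    · exact Primrec.option_some.comp Primrec.snd
    · exact Primrec.const none
  have h4 : PrimrecPred fun p : REAAx × (ℕ × Cond ℕ × Cond (ℕ × ℕ)) =>
      p.2.2.2.filterMap (badO p.1.2.1) = [] := Primrec.eq.comp hbad (Primrec.const [])
  have hkeep : Primrec fun p : REAAx × (ℕ × Cond ℕ × Cond (ℕ × ℕ)) =>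
      p.2.2.2.filterMap (keepO p.1.2.1) := by
    apply Primrec.listFilterMap pτ
    apply Primrec.ite
    · exact Primrec.nat_lt.comp (Primrec.fst.comp (Primrec.fst.comp Primrec.snd))
        (pl.comp Primrec.fst)
    · exact Primrec.option_some.comp Primrec.snd
    · exact Primrec.const none
  have h5 : PrimrecPred fun p : REAAx × (ℕ × Cond ℕ × Cond (ℕ × ℕ)) =>
      p.1.1 = p.2.2.2.filterMap (keepO p.1.2.1) := Primrec.eq.comp pax hkeep
  exact h1.and (h2.and (h3.and (h4.and h5)))

lemma computable_OFun (n : ℕ) : Computable (OFun n) := by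
  apply Computable.option_bind
  · exact Computable.decode.comp (Computable.snd.comp Computable.fst)
  · apply Computable₂.mk
    apply Computable.of_eq (f := fun q : ((REAAx × ℕ) × ℕ) × (ℕ × Cond ℕ × Cond (ℕ × ℕ)) =>
      if CProp n (q.1.1.1, q.2) ∧ q.1.2 = q.2.1 then some (q.2.1, q.2.2.1, q.1.1.1.2.2)
      else none)
    swap
    · intro q; rfl
    apply Primrec.to_comp
    apply Primrec.ite
    · exact PrimrecPred.and
        ((primrec_CProp n).comp ((Primrec.fst.comp (Primrec.fst.comp Primrec.fst)).pair
          Primrec.snd))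
        (Primrec.eq.comp (Primrec.snd.comp Primrec.fst) (Primrec.fst.comp Primrec.snd))
    · exact Primrec.option_some.comp ((Primrec.fst.comp Primrec.snd).pair
        (((Primrec.fst.comp (Primrec.snd.comp Primrec.snd))).pair
          (Primrec.snd.comp (Primrec.snd.comp (Primrec.fst.comp (Primrec.fst.comp
            Primrec.fst))))))
    · exact Primrec.const none

lemma partrec_GFun (n : ℕ) {f : ℕ →. ℕ} (hf : Partrec f) {U : Set (ℕ × Cond ℕ × ℕ)}
    (hU : REPred (· ∈ U)) : Partrec (GFun n f U) := by
  apply Partrec.bind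
  · exact hf.comp (Computable.pred.comp (Computable.fst.comp
      (Computable.snd.comp Computable.fst)))
  · refine Partrec.to₂ (f := fun pv : (REAAx × ℕ) × ℕ =>
      (Part.ofOption (OFun n pv)).bind fun x => Part.assert (x ∈ U) fun _ => Part.some ()) ?_
    apply Partrec.bind
    · exact Computable.ofOption (computable_OFun n)
    · exact (hU.comp Computable.snd).to₂

/-! ### Projection: the existential closure of an r.e. predicate is r.e. -/

open Nat.Partrec Nat.Partrec.Code in
theorem rePred_exists {α : Type} [Primcodable α] {Q : α × ℕ → Prop}
    (hQ : REPred Q) : REPred fun a => ∃ k, Q (a, k) := by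
  obtain ⟨c, hc⟩ := Nat.Partrec.Code.exists_code.1 hQ
  have key : ∀ (a : α) (k : ℕ), Q (a, k) ↔ ∃ s, (evaln s c (encode (a, k))).isSome := by
    intro a k
    have hdom : (eval c (encode (a, k))).Dom ↔ Q (a, k) := by
      rw [hc]
      simp [Part.dom_iff_mem, Part.mem_bind_iff, Part.mem_map_iff, Encodable.encodek,
        Part.mem_assert_iff]
    rw [← hdom, Part.dom_iff_mem]
    constructor
    · rintro ⟨y, hy⟩
      obtain ⟨s, hs⟩ := evaln_complete.1 hy
      exact ⟨s, by simp [Option.isSome_iff_exists]; exact ⟨y, hs⟩⟩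
    · rintro ⟨s, hs⟩
      rw [Option.isSome_iff_exists] at hs
      obtain ⟨y, hy⟩ := hs
      exact ⟨y, evaln_complete.2 ⟨s, hy⟩⟩
  set D : α → ℕ → Bool := fun a t => (evaln t.unpair.1 c (encode (a, t.unpair.2))).isSome with hD
  have hDc : Computable₂ D := by
    have h1 : Primrec fun p : α × ℕ => (((p.2.unpair.1, c), encode (p.1, p.2.unpair.2)) :
        (ℕ × Code) × ℕ) :=
      Primrec.pair (Primrec.pair (Primrec.fst.comp (Primrec.unpair.comp Primrec.snd))
          (Primrec.const c))
        (Primrec.encode.comp (Primrec.pair Primrec.fst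
          (Primrec.snd.comp (Primrec.unpair.comp Primrec.snd))))
    exact (Primrec.option_isSome.comp (primrec_evaln.comp h1)).to_comp.to₂
  have hrf : Partrec fun a : α =>
      (Nat.rfind fun t => Part.some (D a t)).map fun _ => () :=
    (Partrec.rfind hDc.partrec₂).map (Computable.const ()).to₂
  apply hrf.of_eq
  intro a
  apply Part.ext
  intro u
  have : u = () := rfl
  subst this
  simp only [Part.mem_map_iff, Part.mem_assert_iff, Part.mem_some_iff]
  constructor
  · rintro ⟨t, ht, -⟩
    have := Nat.rfind_spec ht
    simp only [Part.mem_some_iff] at this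
    refine ⟨⟨t.unpair.2, (key a t.unpair.2).2 ⟨t.unpair.1, ?_⟩⟩, trivial⟩
    simpa [hD] using this.symm
  · rintro ⟨⟨k, hk⟩, -⟩
    obtain ⟨s, hs⟩ := (key a k).1 hk
    have hDt : D a (Nat.pair s k) = true := by simp only [hD, Nat.unpair_pair]; exact hs
    have : (Nat.rfind fun t => Part.some (D a t)).Dom := by
      refine Nat.rfind_dom.2 ?_
      exact ⟨Nat.pair s k, by simp [hDt], fun {m} _ => trivial⟩
    obtain ⟨t, ht⟩ := Part.dom_iff_mem.1 this
    exact ⟨t, ht, trivial⟩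

/-! ### Characterizing membership in the axiom set -/

lemma GFun_dom (n : ℕ) (f : ℕ →. ℕ) (U : Set (ℕ × Cond ℕ × ℕ)) (p : REAAx × ℕ) :
    (GFun n f U p).Dom ↔ ∃ t : ℕ × Cond ℕ × Cond (ℕ × ℕ),
      decode p.2 = some t ∧ CProp n (p.1, t) ∧ t.1 ∈ f (Nat.pred p.1.2.1) ∧
        (t.1, t.2.1, p.1.2.2) ∈ U := by
  have hmem : (GFun n f U p).Dom ↔ () ∈ GFun n f U p := by
    rw [Part.dom_iff_mem]
    exact ⟨fun ⟨y, hy⟩ => by rwa [show y = () from rfl] at hy, fun h => ⟨(), h⟩⟩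
  rw [hmem]
  simp only [GFun, Part.mem_bind_iff, Part.mem_ofOption, Part.mem_assert_iff,
    Part.mem_some_iff, Option.mem_def, OFun, Option.bind_eq_some_iff]
  constructor
  · rintro ⟨v, hv, x, ⟨t, hdec, hx⟩, hxU, -⟩
    split at hx
    · rename_i hcond
      cases hx
      obtain ⟨hC, rfl⟩ := hcond
      exact ⟨t, hdec, hC, hv, hxU⟩
    · cases hx
  · rintro ⟨t, hdec, hC, hfv, hU'⟩
    refine ⟨t.1, hfv, (t.1, t.2.1, p.1.2.2), ⟨t, hdec, ?_⟩, hU', trivial⟩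
    rw [if_pos ⟨hC, rfl⟩]

lemma keepO_eq_some {l : ℕ} {q r : (ℕ × ℕ) × Bool} :
    keepO l q = some r ↔ q.1.1 < l ∧ r = q := by
  unfold keepO
  split
  · rename_i h; simp [h, eq_comm]
  · rename_i h; simp [h]

lemma map_trEnt_unpair (σ : Cond ℕ) :
    (σ.map fun q => (unpairN q.1, q.2)).map trEnt = σ := by
  induction σ with
  | nil => rfl
  | cons a l ih => simp [trEnt, pairN_unpairN, ih]

/-! ### The main theorem -/

/-- Every `n`-REA operator arises from an r.e. set of `n`-REA axioms: if `f` is a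
partial computable function and `W` is a uniformly c.e.-in listing of enumeration
operators (given by the c.e. set `U` of axioms), then there is a c.e. set `𝒜_f` of
`n`-REA axioms whose induced operator equals `J_f`. -/
theorem nREA_operator_from_ce_axioms (n : ℕ)
    (W : ℕ → Set ℕ → Set ℕ) (f : ℕ →. ℕ) (hf : Partrec f)
    (U : Set (ℕ × Cond ℕ × ℕ)) (hU : REPred (· ∈ U))
    (hWU : ∀ e Z y, y ∈ W e Z ↔ ∃ σ, (e, σ, y) ∈ U ∧ Accurate Z σ) :
    ∃ 𝒜 : Set REAAx, REPred (· ∈ 𝒜) ∧ (∀ a ∈ 𝒜, IsNREAAx n a) ∧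
      ∀ (X : Set ℕ) (l y : ℕ),
        pairN l y ∈ Jf W f n X ↔
          ((l = 0 ∧ y ∈ X) ∨ ∃ σ, (σ, (l, y)) ∈ 𝒜 ∧ AccurateN (Jf W f n X) σ) := by
  classical
  set 𝒜 : Set REAAx := {a | ∃ k, (GFun n f U (a, k)).Dom} with h𝒜
  -- membership characterization
  have memA : ∀ a : REAAx, a ∈ 𝒜 ↔ ∃ e σ τ, e ∈ f (Nat.pred a.2.1) ∧ (e, σ, a.2.2) ∈ U ∧
      CProp n (a, (e, σ, τ)) := by
    intro a
    constructor
    · rintro ⟨k, hk⟩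
      rw [GFun_dom] at hk
      obtain ⟨t, -, hC, hfv, hU'⟩ := hk
      exact ⟨t.1, t.2.1, t.2.2, hfv, hU', hC⟩
    · rintro ⟨e, σ, τ, hfv, hU', hC⟩
      refine ⟨encode (e, σ, τ), ?_⟩
      rw [GFun_dom]
      exact ⟨(e, σ, τ), by simp [Encodable.encodek], hC, hfv, hU'⟩
  refine ⟨𝒜, ?_, ?_, ?_⟩
  · -- r.e.
    have h1 : REPred fun p : REAAx × ℕ => (GFun n f U p).Dom :=
      (partrec_GFun n hf hU).dom_re
    have h2 : REPred fun a : REAAx => ∃ k, (GFun n f U (a, k)).Dom := rePred_exists h1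
    exact h2.of_eq fun a => by simp [h𝒜]
  · -- axioms are n-REA
    intro a ha
    obtain ⟨e, σ, τ, -, -, hC⟩ := (memA a).1 ha
    obtain ⟨hpos, hle, -, -, hkeep⟩ := hC
    refine ⟨hpos, hle, ?_⟩
    intro q hq
    rw [hkeep] at hq
    rw [List.mem_filterMap] at hq
    obtain ⟨r, -, hr⟩ := hq
    obtain ⟨hlt, rfl⟩ := keepO_eq_some.1 hr
    exact hlt
  · -- the operator equivalence
    intro X l y
    show pairN l y ∈ (levels W f X n).2 ↔ _
    rw [pairN_mem_levels]
    cases l with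
    | zero =>
      constructor
      · rintro ⟨-, hy⟩
        exact Or.inl ⟨rfl, hy⟩
      · rintro (⟨-, hy⟩ | ⟨σ', hmem, -⟩)
        · exact ⟨Nat.zero_le n, hy⟩
        · obtain ⟨e, σ, τ, -, -, hC⟩ := (memA _).1 hmem
          exact absurd hC.1 (by simp)
    | succ m =>
      constructor
      · rintro ⟨hmn, hy⟩
        rw [levels_fst_succ] at hy
        obtain ⟨e, he, hyW⟩ := hy
        obtain ⟨σ, hσU, hacc⟩ := (hWU e _ y).1 hyW
        set τ : Cond (ℕ × ℕ) := σ.map fun q => (unpairN q.1, q.2) with hτ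
        have hστ : σ = τ.map trEnt := (map_trEnt_unpair σ).symm
        refine Or.inr ⟨τ.filterMap (keepO (m+1)), ?_, ?_⟩
        · rw [memA]
          refine ⟨e, σ, τ, by simpa using he, hσU, ?_⟩
          refine ⟨Nat.succ_pos m, hmn, hστ, ?_, rfl⟩
          -- no bad entries
          rw [List.filterMap_eq_nil_iff]
          intro r hr
          rw [hτ, List.mem_map] at hr
          obtain ⟨q, hqσ, rfl⟩ := hr
          unfold badO
          rw [if_neg]
          rintro ⟨hb, hge⟩
          have hz : q.1 ∈ (levels W f X m).2 := (hacc q hqσ).1 hb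
          rw [mem_levels_snd] at hz
          obtain ⟨i, x, him, -, hze⟩ := hz
          have := pairN_inj ((pairN_unpairN q.1).trans hze)
          simp only at hge
          omega
        · -- accuracy
          intro r hr
          rw [List.mem_filterMap] at hr
          obtain ⟨r', hr'τ, hsome⟩ := hr
          obtain ⟨hlt, rfl⟩ := keepO_eq_some.1 hsome
          rw [hτ, List.mem_map] at hr'τ
          obtain ⟨q, hqσ, rfl⟩ := hr'τ
          have hacc' := hacc q hqσ
          simp only at hlt
          show q.2 = true ↔ pairN (unpairN q.1).1 (unpairN q.1).2 ∈ (levels W f X n).2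
          rw [pairN_mem_levels, hacc']
          have hq1 : q.1 ∈ (levels W f X m).2 ↔
              (unpairN q.1).1 ≤ m ∧ (unpairN q.1).2 ∈ (levels W f X (unpairN q.1).1).1 := by
            conv_lhs => rw [← pairN_unpairN q.1]
            rw [pairN_mem_levels]
          rw [hq1]
          constructor
          · rintro ⟨-, hx⟩; exact ⟨by omega, hx⟩
          · rintro ⟨-, hx⟩; exact ⟨by omega, hx⟩
      · rintro (⟨h0, -⟩ | ⟨σ', hmem, hacc⟩)
        · exact absurd h0 (Nat.succ_ne_zero m)
        · obtain ⟨e, σ, τ, hfv, hσU, hC⟩ := (memA _).1 hmem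
          obtain ⟨-, hle, hστ, hbad, hkeep⟩ := hC
          dsimp only at hfv hσU hle hστ hbad hkeep
          have hAcc : Accurate (levels W f X m).2 σ := by
            intro q hq
            rw [hστ, List.mem_map] at hq
            obtain ⟨r, hrτ, rfl⟩ := hq
            by_cases hcol : r.1.1 < m + 1
            · have hrσ' : r ∈ σ' := by
                rw [hkeep, List.mem_filterMap]
                exact ⟨r, hrτ, keepO_eq_some.2 ⟨hcol, rfl⟩⟩
              have hthis := hacc r hrσ'
              rw [show Jf W f n X = (levels W f X n).2 from rfl] at hthis
              show r.2 = true ↔ pairN r.1.1 r.1.2 ∈ (levels W f X m).2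
              rw [hthis, pairN_mem_levels, pairN_mem_levels]
              constructor
              · rintro ⟨-, hx⟩; exact ⟨by omega, hx⟩
              · rintro ⟨-, hx⟩; exact ⟨by omega, hx⟩
            · have hrfalse : r.2 = false := by
                by_contra hb
                have hb' : r.2 = true := by
                  cases hr2 : r.2
                  · exact absurd hr2 hb
                  · rfl
                have : badO (m+1) r = some r := by
                  unfold badO; rw [if_pos ⟨hb', by omega⟩]
                have : r ∈ τ.filterMap (badO (m+1)) := List.mem_filterMap.2 ⟨r, hrτ, this⟩
                rw [hbad] at this
                exact absurd this (List.not_mem_nil (a := r))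
              show r.2 = true ↔ pairN r.1.1 r.1.2 ∈ (levels W f X m).2
              rw [hrfalse]
              simp only [Bool.false_eq_true, false_iff]
              intro hmem'
              rw [pairN_mem_levels] at hmem'
              omega
          have hyW : y ∈ W e (levels W f X m).2 := (hWU e _ y).2 ⟨σ, hσU, hAcc⟩
          refine ⟨hle, ?_⟩
          rw [levels_fst_succ]
          exact ⟨e, by simpa using hfv, hyW⟩
end

section
/- Three flip-flops kill the back-and-forth computation: if stages s₀ < s₁ < s₂ < s₃ satisfy (i) A_{s_l}(x) ≠ A_{s_{l+1}}(x) for l = 0,1,2; (ii) at each s_l (l ≤ 2) there is an s_l-supported approximation ξ_l to the 2-REA set X_e with Φ_{j,s_l}(A_{s_l}) ⊇ ξ_l and Φ_{j,s_l}(ξ_l) ⊇ A_{s_l}↾(x+1); (iii) A_{s_0} ⊆ A_{s_2} and A_{s_1} ⊆ A_{s_3}; then there is no s₃-supported approximation ξ₃ to X_e with Φ_{j,s_3}(A_{s_3}) ⊇ ξ₃ and Φ_{j,s_3}(ξ₃) ⊇ A_{s_3}↾(x+1). -/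
/-- The restriction `χ↾(x+1)` of `χ` to points with code `≤ x`. -/
def restrictTo (χ : PartFn) (x : ℕ) : PartFn :=
  fun p => if pairN p.1 p.2 ≤ x then χ p else none

/-- Two supported approximations cannot disagree on column `0`. -/
lemma noCol0 {X : Set ℕ} {A A' : Set REAAxiom} {χ χ' : PartFn}
    (s : Supported 2 X A χ) (s' : Supported 2 X A' χ')
    {q : ℕ × ℕ} {b : Bool} (h : χ q = some b) (h' : χ' q = some (!b)) :
    q.1 ≠ 0 := by
  intro h0
  have hq : q = (0, q.2) := by rw [← h0]
  rw [hq] at h h'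
  have e1 := s.1 q.2 b h
  have e2 := s'.1 q.2 (!b) h'
  cases b with
  | false => exact absurd (e1.mpr (e2.mp rfl)) (by simp)
  | true => exact absurd (e2.mpr (e1.mp rfl)) (by simp)

/-- Disagreements happen at columns `≤ 2`. -/
lemma colLe2 {X : Set ℕ} {A A' : Set REAAxiom} {χ χ' : PartFn}
    (s : Supported 2 X A χ) (s' : Supported 2 X A' χ')
    {q : ℕ × ℕ} {b : Bool} (h : χ q = some b) (h' : χ' q = some (!b)) :
    q.1 ≤ 2 := by
  by_contra h2
  push_neg at h2
  have hq : q = (q.1, q.2) := rfl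
  rw [hq] at h h'
  have e1 := s.2.1 q.1 q.2 b h2 h
  have e2 := s'.2.1 q.1 q.2 (!b) h2 h'
  rw [e1] at e2
  exact absurd e2 (by simp)

/-- The cascade step: a disagreement between consecutive supported
approximations forces a disagreement between the next pair at a strictly
smaller column. -/
lemma cascade {A1 A2 A3 : Set REAAxiom} {χ₁ χ₂ χ₃ : PartFn}
    (hA12 : A1 ⊆ A2) (hA23 : A2 ⊆ A3)
    (hax2 : ∀ a ∈ A2, IsNREAAxiom 2 a)
    (s1 : Supported 2 ∅ A1 χ₁) (s2 : Supported 2 ∅ A2 χ₂)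
    (s3 : Supported 2 ∅ A3 χ₃)
    (h12 : ∀ q, (χ₁ q).isSome → (χ₂ q).isSome)
    (h23 : ∀ q, (χ₂ q).isSome → (χ₃ q).isSome)
    (hR : Restricts χ₁ χ₃)
    (q : ℕ × ℕ) (b : Bool) (hq0 : 0 < q.1) (hq2 : q.1 ≤ 2)
    (h1 : χ₁ q = some b) (h2 : χ₂ q = some (!b)) :
    ∃ q' b', q'.1 < q.1 ∧ χ₂ q' = some b' ∧ χ₃ q' = some (!b') := by
  have hq : q = (q.1, q.2) := rfl
  cases b with
  | true =>
      -- χ₁ q = true : an axiom in A1 is satisfied by χ₁ but must fail in χ₂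
      obtain ⟨a, haA, haout, hahyp⟩ :=
        (s1.2.2 q.1 q.2 true hq0 hq2 (hq ▸ h1)).mp rfl
      have hnot : ¬ Restricts a.hyp χ₂ := by
        intro hr
        have := (s2.2.2 q.1 q.2 false hq0 hq2 (hq ▸ h2)).mpr
          ⟨a, hA12 haA, haout, hr⟩
        simp at this
      simp only [Restricts, not_forall, Classical.not_imp] at hnot
      obtain ⟨q', d, hhq', hne⟩ := hnot
      have hχ₁ : χ₁ q' = some d := hahyp q' d hhq'
      obtain ⟨d', hd'⟩ := Option.isSome_iff_exists.mp (h12 q' (by simp [hχ₁]))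
      have hdd : d' = !d := by
        cases d <;> cases d' <;> first | rfl | exact absurd hd' hne
      refine ⟨q', !d, ?_, by rw [hd', hdd], by
        rw [hR q' d hχ₁]; cases d <;> rfl⟩
      have := (hax2 a (hA12 haA)).2.2 q' (by simp [hhq'])
      rw [haout] at this
      exact this
  | false =>
      -- χ₂ q = true : an axiom in A2 is satisfied by χ₂ but must fail in χ₃
      obtain ⟨a, haA, haout, hahyp⟩ :=
        (s2.2.2 q.1 q.2 true hq0 hq2 (hq ▸ h2)).mp rfl
      have hχ₃ : χ₃ q = some false := hR q false h1
      have hnot : ¬ Restricts a.hyp χ₃ := by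
        intro hr
        have := (s3.2.2 q.1 q.2 false hq0 hq2 (hq ▸ hχ₃)).mpr
          ⟨a, hA23 haA, haout, hr⟩
        simp at this
      simp only [Restricts, not_forall, Classical.not_imp] at hnot
      obtain ⟨q', d, hhq', hne⟩ := hnot
      have hχ₂ : χ₂ q' = some d := hahyp q' d hhq'
      obtain ⟨d', hd'⟩ := Option.isSome_iff_exists.mp (h23 q' (by simp [hχ₂]))
      have hdd : d' = !d := by
        cases d <;> cases d' <;> first | rfl | exact absurd hd' hne
      refine ⟨q', d, ?_, hχ₂, by rw [hd', hdd]⟩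
      have := (hax2 a haA).2.2 q' (by simp [hhq'])
      rw [haout] at this
      exact this

/-- Three flip-flops kill the back-and-forth computation: if at stages
`s₀ < s₁ < s₂ < s₃` the approximation to `A` flips its value at a point `p`
(of code `≤ x`) three times, with `A_{s₀} ⊆ A_{s₂}` and `A_{s₁} ⊆ A_{s₃}`, and at
each of `s₀, s₁, s₂` there is an `s_l`-supported approximation `ξ_l` to the 2-REA
set `X_e` (with growing domains) satisfying `Φ_{j,s_l}(A_{s_l}) ⊇ ξ_l` and
`Φ_{j,s_l}(ξ_l) ⊇ A_{s_l}↾(x+1)`, then there is no such `s₃`-supported witness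
`ξ₃` extending the pattern at stage `s₃`. -/
theorem three_flipflops_kill_computation
    (𝒜X : ℕ → Set REAAxiom) (hXmono : Monotone 𝒜X)
    (hXax : ∀ s, ∀ a ∈ 𝒜X s, IsNREAAxiom 2 a)
    (Aappr : ℕ → PartFn)
    (Φ : ℕ → PartFn → PartFn)
    (hΦmono : ∀ s t χ χ', s ≤ t → Restricts χ χ' → Restricts (Φ s χ) (Φ t χ'))
    (s₀ s₁ s₂ s₃ : ℕ) (hs₀ : s₀ < s₁) (hs₁ : s₁ < s₂) (hs₂ : s₂ < s₃)
    (p : ℕ × ℕ) (x : ℕ) (hpx : pairN p.1 p.2 ≤ x)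
    (b₀ b₁ b₂ b₃ : Bool)
    (hv₀ : Aappr s₀ p = some b₀) (hv₁ : Aappr s₁ p = some b₁)
    (hv₂ : Aappr s₂ p = some b₂) (hv₃ : Aappr s₃ p = some b₃)
    (hne₀ : b₀ ≠ b₁) (hne₁ : b₁ ≠ b₂) (hne₂ : b₂ ≠ b₃)
    (hA02 : Restricts (Aappr s₀) (Aappr s₂))
    (hA13 : Restricts (Aappr s₁) (Aappr s₃))
    (ξ₀ ξ₁ ξ₂ : PartFn)
    (hξ₀ : Supported 2 ∅ (𝒜X s₀) ξ₀ ∧ Restricts ξ₀ (Φ s₀ (Aappr s₀)) ∧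
      Restricts (restrictTo (Aappr s₀) x) (Φ s₀ ξ₀))
    (hξ₁ : Supported 2 ∅ (𝒜X s₁) ξ₁ ∧ Restricts ξ₁ (Φ s₁ (Aappr s₁)) ∧
      Restricts (restrictTo (Aappr s₁) x) (Φ s₁ ξ₁))
    (hξ₂ : Supported 2 ∅ (𝒜X s₂) ξ₂ ∧ Restricts ξ₂ (Φ s₂ (Aappr s₂)) ∧
      Restricts (restrictTo (Aappr s₂) x) (Φ s₂ ξ₂))
    (hdom₀₁ : ∀ q, (ξ₀ q).isSome → (ξ₁ q).isSome)
    (hdom₁₂ : ∀ q, (ξ₁ q).isSome → (ξ₂ q).isSome) :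
    ¬ ∃ ξ₃, Supported 2 ∅ (𝒜X s₃) ξ₃ ∧
      (∀ q, (ξ₂ q).isSome → (ξ₃ q).isSome) ∧
      Restricts ξ₁ ξ₃ ∧
      Restricts ξ₃ (Φ s₃ (Aappr s₃)) ∧
      Restricts (restrictTo (Aappr s₃) x) (Φ s₃ ξ₃) := by
  rintro ⟨ξ₃, hsup₃, hdom₂₃, hξ₁₃, hξ₃Φ, hΦξ₃⟩
  obtain ⟨hsup₀, hξ₀Φ, hΦξ₀⟩ := hξ₀
  obtain ⟨hsup₁, hξ₁Φ, hΦξ₁⟩ := hξ₁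
  obtain ⟨hsup₂, hξ₂Φ, hΦξ₂⟩ := hξ₂
  -- ξ₀ ⊆ ξ₂, since both restrict Φ s₂ (Aappr s₂) and dom ξ₀ ⊆ dom ξ₂
  have hξ₀₂ : Restricts ξ₀ ξ₂ := by
    intro q b hq
    obtain ⟨b', hb'⟩ := Option.isSome_iff_exists.mp
      (hdom₁₂ q (hdom₀₁ q (by simp [hq])))
    have e1 : Φ s₂ (Aappr s₂) q = some b' := hξ₂Φ q b' hb'
    have e2 : Φ s₂ (Aappr s₂) q = some b :=
      hΦmono s₀ s₂ _ _ (by omega) hA02 q b (hξ₀Φ q b hq)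
    rw [e1] at e2
    rw [hb']; exact e2
  -- ξ₀ and ξ₁ must disagree somewhere, since b₀ ≠ b₁
  have hnr : ¬ Restricts ξ₀ ξ₁ := by
    intro h
    have e1 : Φ s₁ ξ₁ p = some b₀ :=
      hΦmono s₀ s₁ _ _ (le_of_lt hs₀) h p b₀
        (hΦξ₀ p b₀ (by simp [restrictTo, hpx, hv₀]))
    have e2 : Φ s₁ ξ₁ p = some b₁ :=
      hΦξ₁ p b₁ (by simp [restrictTo, hpx, hv₁])
    rw [e1] at e2
    exact hne₀ (by injection e2)
  simp only [Restricts, not_forall, Classical.not_imp] at hnr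
  obtain ⟨q, b, hq1, hq2'⟩ := hnr
  obtain ⟨b', hb'⟩ := Option.isSome_iff_exists.mp (hdom₀₁ q (by simp [hq1]))
  have hbb : b' = !b := by
    cases b <;> cases b' <;> first | rfl | exact absurd hb' hq2'
  rw [hbb] at hb'
  -- the disagreement between ξ₀ and ξ₁ is at column 1 or 2
  have hc0 : q.1 ≠ 0 := noCol0 hsup₀ hsup₁ hq1 hb'
  have hc2 : q.1 ≤ 2 := colLe2 hsup₀ hsup₁ hq1 hb'
  -- cascade: disagreement between ξ₁ and ξ₂ at column < q.1
  obtain ⟨q', c, hlt, hq'1, hq'2⟩ :=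
    cascade (hXmono (le_of_lt hs₀)) (hXmono (le_of_lt hs₁)) (hXax s₁)
      hsup₀ hsup₁ hsup₂ hdom₀₁ hdom₁₂ hξ₀₂ q b (Nat.pos_of_ne_zero hc0) hc2
      hq1 hb'
  have hc0' : q'.1 ≠ 0 := noCol0 hsup₁ hsup₂ hq'1 hq'2
  -- cascade again: disagreement between ξ₂ and ξ₃ at column < q'.1 ≤ 1
  obtain ⟨q'', c', hlt', hq''1, hq''2⟩ :=
    cascade (hXmono (le_of_lt hs₁)) (hXmono (le_of_lt hs₂)) (hXax s₂)
      hsup₁ hsup₂ hsup₃ hdom₁₂ hdom₂₃ hξ₁₃ q' c (Nat.pos_of_ne_zero hc0')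
      (by omega) hq'1 hq'2
  -- the new disagreement is on column 0: impossible
  have hc0'' : q''.1 ≠ 0 := noCol0 hsup₂ hsup₃ hq''1 hq''2
  omega
end

section
/- Product bound for nested injury subsequences: let N = ∏_{r<M}(N_r + 2) for positive integers N_0,…,N_{M−1}, and let c : {0,…,N−1} → {0,…,M−1} be any coloring of a sequence of N intervals by M colors. Then there exists a color r̂ and a subsequence of indices n_0 < n_1 < ⋯ < n_{N_{r̂}+1} of length N_{r̂} + 2 such that c(n_k) = r̂ for all k and for every n' with n_k < n' < n_{k+1}, c(n') > r̂. -/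
open Finset

private lemma chain_lt (n : ℕ → ℕ) (t : ℕ) (h : ∀ k, k < t → n k < n (k+1)) :
    ∀ k' k, k < k' → k' ≤ t → n k < n k' := by
  intro k'
  induction k' with
  | zero => intro k hk _; omega
  | succ m ih =>
    intro k hk hm
    rcases Nat.lt_succ_iff_lt_or_eq.mp hk with h1 | h1
    · exact (ih k h1 (by omega)).trans (h m (by omega))
    · subst h1; exact h k (by omega)

private lemma key : ∀ M : ℕ, ∀ Nr : ℕ → ℕ, ∀ c : ℕ → ℕ, ∀ a L : ℕ,
    (∏ r ∈ range M, (Nr r + 2)) ≤ L →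
    (∀ i, a ≤ i → i < a + L → c i < M) →
    ∃ r, r < M ∧ ∃ n : ℕ → ℕ,
      (∀ k, k ≤ Nr r + 1 → a ≤ n k ∧ n k < a + L) ∧
      (∀ k, k ≤ Nr r → n k < n (k+1)) ∧
      (∀ k, k ≤ Nr r + 1 → c (n k) = r) ∧
      (∀ k, k ≤ Nr r → ∀ m, n k < m → m < n (k+1) → r < c m) := by
  intro M
  induction M with
  | zero =>
    intro Nr c a L hL hc
    simp only [range_zero, prod_empty] at hL
    exact absurd (hc a le_rfl (by omega)) (Nat.not_lt_zero _)
  | succ M ih =>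
    intro Nr c a L hL hc
    rw [Finset.prod_range_succ'] at hL
    set P : ℕ := ∏ r ∈ range M, (Nr (r+1) + 2) with hP
    have hPpos : 0 < P := Finset.prod_pos (fun i _ => by omega)
    -- hL : P * (Nr 0 + 2) ≤ L
    set S : Finset ℕ := (Finset.Ico a (a+L)).filter (fun i => c i = 0) with hS
    by_cases hcard : Nr 0 + 2 ≤ S.card
    · -- color 0 occurs at least Nr 0 + 2 times
      set f : Fin S.card ↪o ℕ := S.orderEmbOfFin rfl with hf
      have hfmem : ∀ j : Fin S.card, f j ∈ S := fun j => S.orderEmbOfFin_mem rfl j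
      refine ⟨0, by omega, fun k => if h : k < Nr 0 + 2 then f (Fin.castLE hcard ⟨k, h⟩) else 0,
        ?_, ?_, ?_, ?_⟩
      · intro k hk
        simp only [dif_pos (by omega : k < Nr 0 + 2)]
        have := hfmem (Fin.castLE hcard ⟨k, by omega⟩)
        simp only [hS, Finset.mem_filter, Finset.mem_Ico] at this
        exact ⟨this.1.1, this.1.2⟩
      · intro k hk
        simp only [dif_pos (by omega : k < Nr 0 + 2), dif_pos (by omega : k + 1 < Nr 0 + 2)]
        exact f.strictMono (by simp [Fin.lt_def])
      · intro k hk
        simp only [dif_pos (by omega : k < Nr 0 + 2)]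
        have := hfmem (Fin.castLE hcard ⟨k, by omega⟩)
        simp only [hS, Finset.mem_filter] at this
        exact this.2
      · intro k hk m h1 h2
        simp only [dif_pos (by omega : k < Nr 0 + 2)] at h1
        simp only [dif_pos (by omega : k + 1 < Nr 0 + 2)] at h2
        by_contra hcm
        have hcm0 : c m = 0 := by omega
        have hmS : m ∈ S := by
          have hk1 := hfmem (Fin.castLE hcard ⟨k, by omega⟩)
          have hk2 := hfmem (Fin.castLE hcard ⟨k+1, by omega⟩)
          simp only [hS, Finset.mem_filter, Finset.mem_Ico] at hk1 hk2 ⊢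
          exact ⟨⟨le_trans hk1.1.1 (le_of_lt h1), lt_trans h2 hk2.1.2⟩, hcm0⟩
        have : m ∈ Set.range f := by rw [Finset.range_orderEmbOfFin]; exact hmS
        obtain ⟨j, hj⟩ := this
        rw [← hj] at h1 h2
        have hj1 : (Fin.castLE hcard ⟨k, by omega⟩ : Fin S.card) < j := f.lt_iff_lt.mp h1
        have hj2 : j < (Fin.castLE hcard ⟨k+1, by omega⟩ : Fin S.card) := f.lt_iff_lt.mp h2
        simp only [Fin.lt_def, Fin.coe_castLE] at hj1 hj2
        omega
    · -- find a window free of color 0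
      have hwin : ∃ j, j < Nr 0 + 2 ∧ ∀ i, a + j*P ≤ i → i < a + j*P + P → c i ≠ 0 := by
        by_contra hno
        push_neg at hno
        have hno' : ∀ j : Fin (Nr 0 + 2), ∃ i, a + (j:ℕ)*P ≤ i ∧ i < a + (j:ℕ)*P + P ∧ c i = 0 :=
          fun j => hno j j.isLt
        choose p hp1 hp2 hp3 using hno'
        have : Nr 0 + 2 ≤ S.card := by
          have hinj : Set.InjOn p (Finset.univ : Finset (Fin (Nr 0 + 2))) := by
            intro x _ y _ hxy
            have hx1 := hp1 x; have hx2 := hp2 x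
            have hy1 := hp1 y; have hy2 := hp2 y
            by_contra hne
            have hvne : (x:ℕ) ≠ (y:ℕ) := fun h => hne (Fin.ext h)
            rcases Nat.lt_or_ge (x:ℕ) (y:ℕ) with h | h
            · have e1 : ((x:ℕ)+1) * P ≤ (y:ℕ) * P := Nat.mul_le_mul_right P h
              have e2 : ((x:ℕ)+1) * P = (x:ℕ)*P + P := by ring
              omega
            · have hyx : (y:ℕ) < (x:ℕ) := by omega
              have e1 : ((y:ℕ)+1) * P ≤ (x:ℕ) * P := Nat.mul_le_mul_right P hyx
              have e2 : ((y:ℕ)+1) * P = (y:ℕ)*P + P := by ring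
              omega
          have hmaps : ∀ j ∈ (Finset.univ : Finset (Fin (Nr 0 + 2))), p j ∈ S := by
            intro j _
            have h1 := hp1 j; have h2 := hp2 j; have h3 := hp3 j
            simp only [hS, Finset.mem_filter, Finset.mem_Ico]
            have hjP : (j:ℕ) * P + P ≤ L := by
              have e1 : ((j:ℕ)+1) * P ≤ (Nr 0 + 2) * P := Nat.mul_le_mul_right P j.isLt
              have e2 : ((j:ℕ)+1) * P = (j:ℕ)*P + P := by ring
              have e3 : (Nr 0 + 2) * P = P * (Nr 0 + 2) := by ring
              omega
            exact ⟨⟨by omega, by omega⟩, h3⟩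
          calc Nr 0 + 2 = (Finset.univ : Finset (Fin (Nr 0 + 2))).card := by simp
            _ ≤ S.card := Finset.card_le_card_of_injOn _ hmaps hinj
        exact hcard this
      obtain ⟨j, hj, hwin⟩ := hwin
      have hjP : j * P + P ≤ L := by
        have e1 : (j+1) * P ≤ (Nr 0 + 2) * P := Nat.mul_le_mul_right P (by omega)
        have e2 : (j+1) * P = j*P + P := by ring
        have e3 : (Nr 0 + 2) * P = P * (Nr 0 + 2) := by ring
        omega
      -- apply IH on the window with shifted colors
      obtain ⟨r', hr', n, hn1, hn2, hn3, hn4⟩ :=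
        ih (fun r => Nr (r+1)) (fun i => c i - 1) (a + j*P) P hP.ge
          (by
            intro i hi1 hi2
            show c i - 1 < M
            have h0 := hwin i hi1 (by omega)
            have hM := hc i (by omega) (by omega)
            omega)
      refine ⟨r' + 1, by omega, n, ?_, hn2, ?_, ?_⟩
      · intro k hk
        have := hn1 k hk
        omega
      · intro k hk
        have h3 := hn3 k hk
        have h1 := hn1 k hk
        have h0 := hwin (n k) h1.1 (by omega)
        omega
      · intro k hk m h1 h2
        have h4 := hn4 k hk m h1 h2
        have hb1 := hn1 k (by omega)
        have hb2 := hn1 (k+1) (by omega)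
        have h0 := hwin m (by omega) (by omega)
        omega

/-- Product bound for nested injury subsequences: if `N = ∏_{r<M} (N_r + 2)` with
each `N_r` positive, then for any coloring `c` of `{0,…,N-1}` by `M` colors there
is a color `rhat` and a subsequence `n_0 < n_1 < ⋯ < n_{N_{rhat}+1}` of length
`N_{rhat} + 2`, all colored `rhat`, such that every index strictly between two
consecutive members of the subsequence has color `> rhat`. -/
theorem product_bound_nested_subsequence (M : ℕ) (Nr : Fin M → ℕ)
    (hpos : ∀ r, 0 < Nr r) (N : ℕ) (hN : N = ∏ r, (Nr r + 2))
    (c : Fin N → Fin M) :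
    ∃ rhat : Fin M, ∃ n : Fin (Nr rhat + 2) → Fin N,
      StrictMono n ∧ (∀ k, c (n k) = rhat) ∧
      ∀ (k k' : Fin (Nr rhat + 2)), (k : ℕ) + 1 = (k' : ℕ) →
        ∀ n' : Fin N, n k < n' → n' < n k' → rhat < c n' := by
  classical
  set Nr' : ℕ → ℕ := fun r => if h : r < M then Nr ⟨r, h⟩ else 0 with hNr'
  set c' : ℕ → ℕ := fun i => if h : i < N then (c ⟨i, h⟩ : ℕ) else 0 with hc'
  have hprod : (∏ r ∈ range M, (Nr' r + 2)) = N := by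
    rw [hN]
    rw [← Fin.prod_univ_eq_prod_range (fun r => Nr' r + 2) M]
    apply Finset.prod_congr rfl
    intro i _
    simp [hNr', i.isLt]
  have hcbound : ∀ i, 0 ≤ i → i < 0 + N → c' i < M := by
    intro i _ hi
    simp only [Nat.zero_add] at hi
    simp only [hc', dif_pos hi]
    exact (c ⟨i, hi⟩).isLt
  obtain ⟨r, hr, n, h1, h2, h3, h4⟩ := key M Nr' c' 0 N (le_of_eq hprod) hcbound
  refine ⟨⟨r, hr⟩, ?_⟩
  have hNe : Nr' r = Nr ⟨r, hr⟩ := by simp [hNr', hr]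
  rw [← hNe]
  refine ⟨fun k => ⟨n k.val, by
    have := h1 k.val (by omega)
    omega⟩, ?_, ?_, ?_⟩
  · intro k k' hkk
    have hlt : n k.val < n k'.val := by
      apply chain_lt n (Nr' r + 1) (fun i hi => h2 i (by omega)) k'.val k.val hkk
      omega
    exact hlt
  · intro k
    have h3k := h3 k.val (by omega)
    have hb := h1 k.val (by omega)
    have hnk : (n k.val) < N := by omega
    apply Fin.ext
    simp only [hc', dif_pos hnk] at h3k
    exact h3k
  · intro k k' hkk' n' hlt1 hlt2
    have hk : k.val ≤ Nr' r := by omega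
    have h4k := h4 k.val hk n'.val hlt1 (by
      have : k.val + 1 = k'.val := hkk'
      rw [this]; exact hlt2)
    simp only [hc', dif_pos n'.isLt] at h4k
    simpa [Fin.lt_def] using h4k
end
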